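/- arXiv:2412.08415 — 2 statements merged into one kernel-verified Lean document; each statement's English description precedes it below -/
import Mathlib

section
/- Fix q₀,q₁ ∈ ℝ² with q₀ ≠ 0 and q₁ ≠ 0. Then the number of positive-parameter chords of H₀ tends to infinity as the energy tends to 0 from above: for every M ∈ ℕ there exists c₀ > 0 such that for all c ∈ (0,c₀) the set {η > 0 : there exists a chord of H₀ at energy c from q₀ to q₁ with parameter η} has at least M elements. -/
open Set

abbrev R2 : Type := ℝ × ℝ
abbrev Phase : Type := R2 × R2

noncomputable section

def sq2 (a : R2) : ℝ := a.1 ^ 2 + a.2 ^ 2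

/-- Euclidean norm on `ℝ²`. -/
def enorm2 (a : R2) : ℝ := Real.sqrt (sq2 a)

/-- Euclidean inner product on `ℝ²`. -/
def inner2 (a b : R2) : ℝ := a.1 * b.1 + a.2 * b.2

/-- The Copernican Hamiltonian `H₀(q,p) = (p₁² + p₂²)/2 + p₁q₂ − p₂q₁`. -/
def H0 (x : Phase) : ℝ :=
  (x.2.1 ^ 2 + x.2.2 ^ 2) / 2 + x.2.1 * x.1.2 - x.2.2 * x.1.1

/-- The Hamiltonian vector field `X_H = (∂H/∂p₁, ∂H/∂p₂, −∂H/∂q₁, −∂H/∂q₂)`. -/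
def XH (H : Phase → ℝ) (x : Phase) : Phase :=
  ((fderiv ℝ H x ((0, 0), (1, 0)), fderiv ℝ H x ((0, 0), (0, 1))),
   (-fderiv ℝ H x ((1, 0), (0, 0)), -fderiv ℝ H x ((0, 1), (0, 0))))

/-- `v` is a chord of `H` at energy `e` from `q0` to `q1` with parameter `η`. -/
def IsChord (H : Phase → ℝ) (e : ℝ) (q0 q1 : R2) (η : ℝ) (v : ℝ → Phase) : Prop :=
  (v 0).1 = q0 ∧ (v 1).1 = q1 ∧
  (∀ t ∈ Icc (0:ℝ) 1, HasDerivWithinAt v (η • XH H (v t)) (Icc (0:ℝ) 1) t) ∧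
  ∀ t ∈ Icc (0:ℝ) 1, H (v t) = e

/-- The rotation matrix `R(t) = [[cos t, sin t], [−sin t, cos t]]` acting on `ℝ²`. -/
def rot (t : ℝ) (a : R2) : R2 :=
  (Real.cos t * a.1 + Real.sin t * a.2, -Real.sin t * a.1 + Real.cos t * a.2)

/-- `f_{c,q₀,q₁}(η) = −cη² + η⟨q₁, R(η+π/2)q₀⟩ + (|q₀|²+|q₁|²)/2 − ⟨q₁, R(η)q₀⟩`. -/
def ff (c : ℝ) (q0 q1 : R2) (η : ℝ) : ℝ :=
  -c * η ^ 2 + η * inner2 q1 (rot (η + Real.pi / 2) q0) +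
    (sq2 q0 + sq2 q1) / 2 - inner2 q1 (rot η q0)

end


noncomputable section
def pi11 : Phase →L[ℝ] ℝ := (ContinuousLinearMap.fst ℝ ℝ ℝ).comp (ContinuousLinearMap.fst ℝ R2 R2)
def pi12 : Phase →L[ℝ] ℝ := (ContinuousLinearMap.snd ℝ ℝ ℝ).comp (ContinuousLinearMap.fst ℝ R2 R2)
def pi21 : Phase →L[ℝ] ℝ := (ContinuousLinearMap.fst ℝ ℝ ℝ).comp (ContinuousLinearMap.snd ℝ R2 R2)
def pi22 : Phase →L[ℝ] ℝ := (ContinuousLinearMap.snd ℝ ℝ ℝ).comp (ContinuousLinearMap.snd ℝ R2 R2)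

lemma XH_H0 (x : Phase) : XH H0 x = ((x.2.1 + x.1.2, x.2.2 - x.1.1), (x.2.2, -x.2.1)) := by
  have h11 : HasFDerivAt (fun x : Phase => x.1.1) pi11 x := pi11.hasFDerivAt
  have h12 : HasFDerivAt (fun x : Phase => x.1.2) pi12 x := pi12.hasFDerivAt
  have h21 : HasFDerivAt (fun x : Phase => x.2.1) pi21 x := pi21.hasFDerivAt
  have h22 : HasFDerivAt (fun x : Phase => x.2.2) pi22 x := pi22.hasFDerivAt
  have h := ((((h21.mul h21).add (h22.mul h22)).mul_const ((2:ℝ)⁻¹)).add (h21.mul h12)).sub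
    (h22.mul h11)
  have hfun : H0 = fun y : Phase => (y.2.1 * y.2.1 + y.2.2 * y.2.2) * (2:ℝ)⁻¹ + y.2.1 * y.1.2 -
      y.2.2 * y.1.1 := by
    funext y; simp [H0]; ring
  rw [XH, hfun, (show HasFDerivAt (fun y : Phase => (y.2.1 * y.2.1 + y.2.2 * y.2.2) * (2:ℝ)⁻¹ + y.2.1 * y.1.2 -
      y.2.2 * y.1.1) _ x from h).fderiv]
  simp [pi11, pi12, pi21, pi22]
  norm_num
  constructor <;> ring

lemma chord_exists (c : ℝ) (q0 q1 : R2) (η : ℝ) (hη : η ≠ 0) (hroot : ff c q0 q1 η = 0) :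
    ∃ v : ℝ → Phase, IsChord H0 c q0 q1 η v := by
  obtain ⟨p1, e1⟩ : ∃ p1 : ℝ, η * p1 = Real.cos η * q1.1 - Real.sin η * q1.2 - q0.1 :=
    ⟨(Real.cos η * q1.1 - Real.sin η * q1.2 - q0.1) / η, by field_simp⟩
  obtain ⟨p2, e2⟩ : ∃ p2 : ℝ, η * p2 = Real.sin η * q1.1 + Real.cos η * q1.2 - q0.2 :=
    ⟨(Real.sin η * q1.1 + Real.cos η * q1.2 - q0.2) / η, by field_simp⟩
  have hs : Real.sin η ^ 2 + Real.cos η ^ 2 = 1 := Real.sin_sq_add_cos_sq η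
  have hff' : -c*η^2 + η*(q1.1*(-Real.sin η*q0.1 + Real.cos η*q0.2)
      + q1.2*(-Real.cos η*q0.1 - Real.sin η*q0.2))
      + (q0.1^2+q0.2^2+q1.1^2+q1.2^2)/2
      - (q1.1*(Real.cos η*q0.1+Real.sin η*q0.2) + q1.2*(-Real.sin η*q0.1+Real.cos η*q0.2))
      = 0 := by
    rw [← hroot]; simp [ff, inner2, rot, sq2, Real.cos_add, Real.sin_add]; ring
  have key : η^2 * ((p1^2+p2^2)/2 + p1*q0.2 - p2*q0.1) = η^2 * c := by
    linear_combination hff' + ((q1.1^2+q1.2^2)/2) * hs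
      + ((η*p1 + (Real.cos η * q1.1 - Real.sin η * q1.2 - q0.1))/2 + η*q0.2) * e1
      + ((η*p2 + (Real.sin η * q1.1 + Real.cos η * q1.2 - q0.2))/2 - η*q0.1) * e2
  have hE : (p1^2+p2^2)/2 + p1*q0.2 - p2*q0.1 = c :=
    mul_left_cancel₀ (pow_ne_zero 2 hη) key
  refine ⟨fun t => ((Real.cos (η*t) * (q0.1 + η*t*p1) + Real.sin (η*t) * (q0.2 + η*t*p2),
      Real.cos (η*t) * (q0.2 + η*t*p2) - Real.sin (η*t) * (q0.1 + η*t*p1)),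
      (Real.cos (η*t) * p1 + Real.sin (η*t) * p2,
      Real.cos (η*t) * p2 - Real.sin (η*t) * p1)), ?_, ?_, ?_, ?_⟩
  · norm_num
  · show (Real.cos (η*1) * (q0.1 + η*1*p1) + Real.sin (η*1) * (q0.2 + η*1*p2),
      Real.cos (η*1) * (q0.2 + η*1*p2) - Real.sin (η*1) * (q0.1 + η*1*p1)) = q1
    rw [Prod.ext_iff]
    constructor
    · show Real.cos (η*1) * (q0.1 + η*1*p1) + Real.sin (η*1) * (q0.2 + η*1*p2) = q1.1
      rw [mul_one]
      linear_combination Real.cos η * e1 + Real.sin η * e2 + q1.1 * hs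
    · show Real.cos (η*1) * (q0.2 + η*1*p2) - Real.sin (η*1) * (q0.1 + η*1*p1) = q1.2
      rw [mul_one]
      linear_combination (-Real.sin η) * e1 + Real.cos η * e2 + q1.2 * hs
  · intro t _
    have hηt : HasDerivAt (fun t : ℝ => η * t) η t := by
      simpa using (hasDerivAt_id t).const_mul η
    have hcos := hηt.cos
    have hsin := hηt.sin
    have hb1 : HasDerivAt (fun t : ℝ => q0.1 + η * t * p1) (η * p1) t := by
      simpa using ((hηt.mul_const p1).const_add q0.1)
    have hb2 : HasDerivAt (fun t : ℝ => q0.2 + η * t * p2) (η * p2) t := by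
      simpa using ((hηt.mul_const p2).const_add q0.2)
    have h1 := (hcos.mul hb1).add (hsin.mul hb2)
    have h2 := (hcos.mul hb2).sub (hsin.mul hb1)
    have h3 := (hcos.mul_const p1).add (hsin.mul_const p2)
    have h4 := (hcos.mul_const p2).sub (hsin.mul_const p1)
    have hv := HasDerivAt.prodMk (HasDerivAt.prodMk h1 h2) (HasDerivAt.prodMk h3 h4)
    refine HasDerivAt.hasDerivWithinAt (HasDerivAt.congr_deriv hv ?_)
    rw [XH_H0]
    simp only [Prod.smul_mk, smul_eq_mul, Prod.mk.injEq]
    refine ⟨⟨?_, ?_⟩, ?_, ?_⟩ <;> ring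
  · intro t _
    have hst : Real.sin (η*t) ^ 2 + Real.cos (η*t) ^ 2 = 1 := Real.sin_sq_add_cos_sq (η*t)
    show H0 ((Real.cos (η*t) * (q0.1 + η*t*p1) + Real.sin (η*t) * (q0.2 + η*t*p2),
      Real.cos (η*t) * (q0.2 + η*t*p2) - Real.sin (η*t) * (q0.1 + η*t*p1)),
      (Real.cos (η*t) * p1 + Real.sin (η*t) * p2,
      Real.cos (η*t) * p2 - Real.sin (η*t) * p1)) = c
    simp only [H0]
    linear_combination hE + ((p1^2+p2^2)/2 + p1*q0.2 - p2*q0.1) * hst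

lemma cont_ff (c : ℝ) (q0 q1 : R2) : Continuous (ff c q0 q1) := by
  unfold ff inner2 rot sq2; fun_prop

lemma ff_expand (c : ℝ) (q0 q1 : R2) (t : ℝ) :
    ff c q0 q1 t = -c*t^2
      + t * (-(q1.1*q0.1 + q1.2*q0.2)*Real.sin t + (q1.1*q0.2 - q1.2*q0.1)*Real.cos t)
      + (sq2 q0 + sq2 q1)/2
      - ((q1.1*q0.1 + q1.2*q0.2)*Real.cos t + (q1.1*q0.2 - q1.2*q0.1)*Real.sin t) := by
  simp [ff, inner2, rot, Real.cos_add, Real.sin_add]; ring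

lemma sq2_pos (a : R2) (h : a ≠ 0) : 0 < sq2 a := by
  rcases eq_or_ne a.1 0 with h1 | h1
  · rcases eq_or_ne a.2 0 with h2 | h2
    · exact absurd (Prod.ext h1 h2) h
    · simp only [sq2]; positivity
  · simp only [sq2]; positivity
end


set_option maxHeartbeats 1000000 in
/-- For `q₀ ≠ 0 ≠ q₁` the number of positive-parameter chords of `H₀` from `q₀` to `q₁` tends
to infinity as the energy tends to `0⁺`. -/
theorem stmt15 (q0 q1 : R2) (h0 : q0 ≠ 0) (h1 : q1 ≠ 0) :
    ∀ M : ℕ, ∃ c0 > (0:ℝ), ∀ c : ℝ, 0 < c → c < c0 →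
      (M : ℕ∞) ≤ {η : ℝ | 0 < η ∧ ∃ v : ℝ → Phase, IsChord H0 c q0 q1 η v}.encard := by
  intro M
  set Cst : ℝ := (sq2 q0 + sq2 q1)/2 with hCdef
  have hCpos : 0 < Cst := by
    have := sq2_pos q0 h0; have := sq2_pos q1 h1; simp only [hCdef]; linarith
  set A : ℝ := q1.1*q0.1 + q1.2*q0.2 with hAdef
  set B : ℝ := q1.1*q0.2 - q1.2*q0.1 with hBdef
  set R : ℝ := Real.sqrt (sq2 q0 * sq2 q1) with hRdef
  have hRpos : 0 < R := Real.sqrt_pos.mpr (mul_pos (sq2_pos q0 h0) (sq2_pos q1 h1))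
  have hRsq : R^2 = sq2 q0 * sq2 q1 :=
    Real.sq_sqrt (mul_pos (sq2_pos q0 h0) (sq2_pos q1 h1)).le
  set z : ℂ := ⟨A, B⟩ with hzdef
  have habs : ‖z‖ = R := by
    rw [Complex.norm_def, Complex.normSq_mk]
    rw [show A * A + B * B = R^2 by rw [hRsq]; simp [hAdef, hBdef, sq2]; ring]
    exact Real.sqrt_sq hRpos.le
  have hz : z ≠ 0 := by
    intro h; rw [h] at habs; simp at habs; exact hRpos.ne' habs.symm
  set φ : ℝ := Complex.arg z with hφdef
  have hA' : A = R * Real.cos φ := by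
    rw [hφdef, Complex.cos_arg hz, habs]; field_simp; rfl
  have hB' : B = R * Real.sin φ := by
    rw [hφdef, Complex.sin_arg z, habs]; field_simp; rfl
  obtain ⟨N, hN⟩ := exists_nat_ge (|φ| + Cst / R + 1)
  have hπ := Real.pi_gt_three
  set T : ℕ → ℝ := fun k => φ + Real.pi/2 + (2*N + k : ℕ) * Real.pi with hTdef
  have hT0C : Cst / R < T 0 ∧ 0 < T 0 := by
    have h1 : (0:ℝ) ≤ Cst / R := by positivity
    have h2 : -|φ| ≤ φ := neg_abs_le φ
    have h3 : (0:ℝ) ≤ 2*(N:ℝ) := by positivity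
    constructor <;>
    · simp only [hTdef]
      push_cast
      nlinarith [mul_nonneg h3 (by linarith : (0:ℝ) ≤ Real.pi - 3)]
  have hTmono : StrictMono T := by
    apply strictMono_nat_of_lt_succ
    intro k
    simp only [hTdef]
    push_cast
    nlinarith
  have hTpos : ∀ k, 0 < T k := fun k =>
    lt_of_lt_of_le hT0C.2 (hTmono.monotone (Nat.zero_le k))
  have hval : ∀ c k, ff c q0 q1 (T k) = -c * (T k)^2 - R * (-1:ℝ)^k * (T k) + Cst := by
    intro c k
    have hsk : Real.sin (T k) * Real.cos φ - Real.cos (T k) * Real.sin φ = (-1:ℝ)^k := by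
      have h : Real.sin (T k - φ) = (-1:ℝ)^k := by
        rw [show T k - φ = Real.pi/2 + (2*N + k : ℕ) * Real.pi by simp [hTdef]; ring]
        rw [Real.sin_add_nat_mul_pi, Real.sin_pi_div_two]
        rw [pow_add, pow_mul]
        norm_num
      rwa [Real.sin_sub] at h
    have hck : Real.cos (T k) * Real.cos φ + Real.sin (T k) * Real.sin φ = 0 := by
      have h : Real.cos (T k - φ) = 0 := by
        rw [show T k - φ = Real.pi/2 + (2*N + k : ℕ) * Real.pi by simp [hTdef]; ring]
        rw [Real.cos_add_nat_mul_pi, Real.cos_pi_div_two, mul_zero]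
      rwa [Real.cos_sub] at h
    rw [ff_expand, ← hAdef, ← hBdef, ← hCdef]
    linear_combination ((T k)*(-Real.sin (T k)) - Real.cos (T k)) * hA'
      + ((T k)*Real.cos (T k) - Real.sin (T k)) * hB'
      + (-(R) * (T k)) * hsk + (-R) * hck
  refine ⟨R * T 0 / (T M)^2, div_pos (mul_pos hRpos (hTpos 0)) (pow_pos (hTpos M) 2), ?_⟩
  intro c hc hcc0
  have hCRT : Cst < T 0 * R := (div_lt_iff₀ hRpos).mp hT0C.1
  have hc0 : c * (T M)^2 < R * T 0 := by
    rw [lt_div_iff₀ (pow_pos (hTpos M) 2)] at hcc0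
    linarith
  have hsign : ∀ k, k ≤ M →
      (Even k → ff c q0 q1 (T k) < 0) ∧ (Odd k → 0 < ff c q0 q1 (T k)) := by
    intro k hk
    have hTk := hTpos k
    have hTkM : T k ≤ T M := hTmono.monotone hk
    have hTksq : (T k)^2 ≤ (T M)^2 := by nlinarith
    constructor
    · intro he
      rw [hval, he.neg_one_pow]
      have : R * T 0 ≤ R * T k := by
        have := hTmono.monotone (Nat.zero_le k)
        nlinarith
      nlinarith
    · intro ho
      rw [hval, ho.neg_one_pow]
      have h5 : R * T 0 ≤ R * T k := by
        have := hTmono.monotone (Nat.zero_le k)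
        nlinarith
      nlinarith
  have hroots : ∀ j : ℕ, j < M → ∃ x, x ∈ Ioo (T j) (T (j+1)) ∧ ff c q0 q1 x = 0 := by
    intro j hj
    have hle : T j ≤ T (j+1) := (hTmono (Nat.lt_succ_self j)).le
    have hcont : ContinuousOn (ff c q0 q1) (Icc (T j) (T (j+1))) :=
      (cont_ff c q0 q1).continuousOn
    rcases Nat.even_or_odd j with he | ho
    · have hneg : ff c q0 q1 (T j) < 0 := (hsign j hj.le).1 he
      have hpos : 0 < ff c q0 q1 (T (j+1)) := (hsign (j+1) (by omega)).2 (Even.add_one he)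
      obtain ⟨x, hx, hfx⟩ := intermediate_value_Ioo hle hcont (⟨hneg, hpos⟩ :
        (0:ℝ) ∈ Ioo (ff c q0 q1 (T j)) (ff c q0 q1 (T (j+1))))
      exact ⟨x, hx, hfx⟩
    · have hpos : 0 < ff c q0 q1 (T j) := (hsign j hj.le).2 ho
      have hneg : ff c q0 q1 (T (j+1)) < 0 := (hsign (j+1) (by omega)).1 (Odd.add_one ho)
      obtain ⟨x, hx, hfx⟩ := intermediate_value_Ioo' hle hcont (⟨hneg, hpos⟩ :
        (0:ℝ) ∈ Ioo (ff c q0 q1 (T (j+1))) (ff c q0 q1 (T j)))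
      exact ⟨x, hx, hfx⟩
  have hex : ∀ j : Fin M, ∃ x, x ∈ Ioo (T j) (T (j+1)) ∧ ff c q0 q1 x = 0 :=
    fun j => hroots j j.2
  choose r hr1 hr2 using hex
  have hrmono : StrictMono r := by
    intro j k hjk
    have ha : r j < T (j+1) := (hr1 j).2
    have hb : T ((j:ℕ)+1) ≤ T k := hTmono.monotone (by omega)
    have hcx : T k < r k := (hr1 k).1
    linarith
  have hsub : Set.range r ⊆ {η : ℝ | 0 < η ∧ ∃ v : ℝ → Phase, IsChord H0 c q0 q1 η v} := by
    rintro _ ⟨j, rfl⟩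
    have hpos : 0 < r j := lt_trans (hTpos j) (hr1 j).1
    exact ⟨hpos, chord_exists c q0 q1 (r j) hpos.ne' (hr2 j)⟩
  have hcard : (Set.range r).encard = (M : ℕ∞) := by
    rw [← Set.image_univ, Set.InjOn.encard_image (hrmono.injective.injOn)]
    simp [Set.encard_univ]
  rw [← hcard]
  exact Set.encard_le_encard hsub
end

section
/- Fix c > 0 and q₀,q₁ ∈ ℝ² with q₀ ≠ q₁. Let V : ℝ² → ℝ be a smooth nonnegative function for which there exist r₀ > 0 and a pair (α,a) with either α = 2 and 0 < a < c²/4, or α > 2 and a > 0, such that for all q with |q| > r₀: V(q) ≤ a/|q|^α and ⟨∇V(q), q/|q|⟩ ≥ −a/|q|^{α+1}. Then there exists a smooth function V₀ : ℝ²×ℝ² → ℝ with dV₀ compactly supported, V₀ > 0 everywhere and V₀(q,p) − d(V₀)_{(q,p)}(0,p) > 0 everywhere (i.e. V₀ ∈ 𝓗), such that for every η ∈ ℝ and every C¹ curve v : [0,1] → ℝ²×ℝ², v is a chord of (q,p) ↦ H₀(q,p) − V(q) at energy c from q₀ to q₁ with parameter η if and only if v is a chord of H₀ − V₀ at energy 0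 from q₀ to q₁ with parameter η. -/
open Set

/-! ### Auxiliary infrastructure -/

noncomputable section AuxDefs

def Pq1 : Phase →L[ℝ] ℝ := (ContinuousLinearMap.fst ℝ ℝ ℝ).comp (ContinuousLinearMap.fst ℝ R2 R2)
def Pq2 : Phase →L[ℝ] ℝ := (ContinuousLinearMap.snd ℝ ℝ ℝ).comp (ContinuousLinearMap.fst ℝ R2 R2)
def Pp1 : Phase →L[ℝ] ℝ := (ContinuousLinearMap.fst ℝ ℝ ℝ).comp (ContinuousLinearMap.snd ℝ R2 R2)
def Pp2 : Phase →L[ℝ] ℝ := (ContinuousLinearMap.snd ℝ ℝ ℝ).comp (ContinuousLinearMap.snd ℝ R2 R2)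

def cut (S L s : ℝ) : ℝ := Real.smoothTransition (1 - Real.log (s / S) / L)

end AuxDefs

@[simp] lemma Pq1_apply (w : Phase) : Pq1 w = w.1.1 := rfl
@[simp] lemma Pq2_apply (w : Phase) : Pq2 w = w.1.2 := rfl
@[simp] lemma Pp1_apply (w : Phase) : Pp1 w = w.2.1 := rfl
@[simp] lemma Pp2_apply (w : Phase) : Pp2 w = w.2.2 := rfl

lemma sq2_nonneg (a : R2) : 0 ≤ sq2 a := by unfold sq2; positivity
lemma enorm2_sq (a : R2) : enorm2 a ^ 2 = sq2 a := Real.sq_sqrt (sq2_nonneg a)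
lemma enorm2_nonneg (a : R2) : 0 ≤ enorm2 a := Real.sqrt_nonneg _

lemma sq2_contDiff : ContDiff ℝ (⊤:ℕ∞) (sq2 : R2 → ℝ) := by
  unfold sq2
  exact (contDiff_fst.pow 2).add (contDiff_snd.pow 2)

lemma norm_sq_le_sq2 (q : R2) : ‖q‖^2 ≤ sq2 q := by
  rw [Prod.norm_def]
  unfold sq2
  rcases max_cases ‖q.1‖ ‖q.2‖ with ⟨h, _⟩ | ⟨h, _⟩ <;> rw [h] <;>
    simp only [Real.norm_eq_abs, sq_abs] <;> nlinarith [sq_nonneg q.1, sq_nonneg q.2]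

lemma norm_le_enorm2 (q : R2) : ‖q‖ ≤ enorm2 q := by
  have h1 : ‖q‖^2 ≤ sq2 q := norm_sq_le_sq2 q
  have := Real.sqrt_le_sqrt h1
  rwa [Real.sqrt_sq (norm_nonneg q)] at this

lemma hasFDerivAt_sq2 (q : R2) : HasFDerivAt sq2
    ((2*q.1) • (ContinuousLinearMap.fst ℝ ℝ ℝ) + (2*q.2) • (ContinuousLinearMap.snd ℝ ℝ ℝ)) q := by
  have hsq : sq2 = fun y : R2 => y.1 * y.1 + y.2 * y.2 := by
    funext y; unfold sq2; ring
  rw [hsq]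
  have h1 : HasFDerivAt (fun y : R2 => y.1) (ContinuousLinearMap.fst ℝ ℝ ℝ) q :=
    (ContinuousLinearMap.fst ℝ ℝ ℝ).hasFDerivAt
  have h2 : HasFDerivAt (fun y : R2 => y.2) (ContinuousLinearMap.snd ℝ ℝ ℝ) q :=
    (ContinuousLinearMap.snd ℝ ℝ ℝ).hasFDerivAt
  have := (h1.mul h1).add (h2.mul h2)
  refine HasFDerivAt.congr_fderiv this ?_
  ext w
  · simp; ring
  · simp; ring

lemma clm_eval (L : R2 →L[ℝ] ℝ) (w : R2) : L w = w.1 * L (1, 0) + w.2 * L (0, 1) := by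
  have hw : L w = L (w.1 • ((1:ℝ), (0:ℝ)) + w.2 • ((0:ℝ), (1:ℝ))) := by
    congr 1; ext <;> simp
  rw [hw, map_add, map_smul, map_smul, smul_eq_mul, smul_eq_mul]

lemma hasFDerivAt_H0 (x : Phase) : HasFDerivAt H0
    (((2:ℝ)⁻¹ • (x.2.1 • Pp1 + x.2.1 • Pp1 + (x.2.2 • Pp2 + x.2.2 • Pp2)) +
      (x.2.1 • Pq2 + x.1.2 • Pp1)) - (x.2.2 • Pq1 + x.1.1 • Pp2)) x := by
  have hH : H0 = fun x : Phase =>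
      ((x.2.1 * x.2.1 + x.2.2 * x.2.2) * 2⁻¹ + x.2.1 * x.1.2) - x.2.2 * x.1.1 := by
    funext y; unfold H0; ring
  rw [hH]
  have h1 : HasFDerivAt (fun y : Phase => y.2.1) Pp1 x := Pp1.hasFDerivAt
  have h2 : HasFDerivAt (fun y : Phase => y.2.2) Pp2 x := Pp2.hasFDerivAt
  have h3 : HasFDerivAt (fun y : Phase => y.1.1) Pq1 x := Pq1.hasFDerivAt
  have h4 : HasFDerivAt (fun y : Phase => y.1.2) Pq2 x := Pq2.hasFDerivAt
  exact ((((h1.mul h1).add (h2.mul h2)).mul_const (2⁻¹:ℝ)).add (h1.mul h4)).sub (h2.mul h3)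

lemma hasFDerivAt_HU (U : R2 → ℝ) (hU : Differentiable ℝ U) (x : Phase) :
    HasFDerivAt (fun y : Phase => H0 y - U y.1)
      (((((2:ℝ)⁻¹ • (x.2.1 • Pp1 + x.2.1 • Pp1 + (x.2.2 • Pp2 + x.2.2 • Pp2)) +
      (x.2.1 • Pq2 + x.1.2 • Pp1)) - (x.2.2 • Pq1 + x.1.1 • Pp2)) -
        (fderiv ℝ U x.1).comp (ContinuousLinearMap.fst ℝ R2 R2))) x := by
  exact (hasFDerivAt_H0 x).sub (((hU x.1).hasFDerivAt).comp x (hasFDerivAt_fst))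

lemma XH_HU (U : R2 → ℝ) (hU : Differentiable ℝ U) (x : Phase) :
    XH (fun y : Phase => H0 y - U y.1) x =
      ((x.2.1 + x.1.2, x.2.2 - x.1.1),
       (x.2.2 + fderiv ℝ U x.1 (1, 0), -x.2.1 + fderiv ℝ U x.1 (0, 1))) := by
  unfold XH
  rw [(hasFDerivAt_HU U hU x).fderiv]
  simp
  constructor
  · constructor <;> rw [Prod.mk_zero_zero, map_zero] <;> ring
  · constructor <;> ring

/-! ### cut function lemmas -/

lemma cut_nonneg (S L s : ℝ) : 0 ≤ cut S L s := Real.smoothTransition.nonneg _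
lemma cut_le_one (S L s : ℝ) : cut S L s ≤ 1 := Real.smoothTransition.le_one _

lemma cut_eq_one {S L s : ℝ} (hS : 0 < S) (hL : 0 < L) (hs : |s| ≤ S) : cut S L s = 1 := by
  unfold cut
  apply Real.smoothTransition.one_of_one_le
  have hlog : Real.log (s / S) ≤ 0 := by
    rw [← Real.log_abs, abs_div, abs_of_pos hS]
    apply Real.log_nonpos (by positivity)
    rw [div_le_one hS]; exact hs
  have : Real.log (s / S) / L ≤ 0 := div_nonpos_of_nonpos_of_nonneg hlog hL.le
  linarith

lemma cut_eq_zero {S L s : ℝ} (hS : 0 < S) (hL : 0 < L) (hs : S * Real.exp L ≤ s) :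
    cut S L s = 0 := by
  unfold cut
  apply Real.smoothTransition.zero_of_nonpos
  have hspos : 0 < s / S := by
    have := Real.exp_pos L
    rw [lt_div_iff₀ hS] at *
    nlinarith
  have hlog : L ≤ Real.log (s / S) := by
    rw [Real.le_log_iff_exp_le hspos, le_div_iff₀ hS]
    linarith [hs]
  have : 1 ≤ Real.log (s / S) / L := (le_div_iff₀ hL).mpr (by linarith)
  linarith

lemma cut_sq2_contDiff {S L : ℝ} (hS : 0 < S) (hL : 0 < L) :
    ContDiff ℝ (⊤:ℕ∞) (fun a : R2 => cut S L (sq2 a)) := by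
  rw [contDiff_iff_contDiffAt]
  intro a
  rcases lt_or_ge (sq2 a) S with h | h
  · apply ContDiffAt.congr_of_eventuallyEq (contDiffAt_const (c := (1:ℝ)))
    have hopen : IsOpen {b : R2 | sq2 b < S} :=
      isOpen_lt (sq2_contDiff.continuous) continuous_const
    filter_upwards [hopen.mem_nhds h] with b hb
    exact cut_eq_one hS hL (by rw [abs_of_nonneg (sq2_nonneg b)]; exact le_of_lt hb)
  · have hpos : 0 < sq2 a := lt_of_lt_of_le hS h
    have h1 : ContDiffAt ℝ (⊤:ℕ∞) (fun s : ℝ => 1 - Real.log (s / S) / L) (sq2 a) := by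
      apply ContDiffAt.sub contDiffAt_const
      apply ContDiffAt.div_const
      apply ContDiffAt.comp (g := Real.log)
      · exact Real.contDiffAt_log.mpr (by positivity)
      · exact contDiffAt_id.div_const S
    exact (Real.smoothTransition.contDiff.contDiffAt.comp _ h1).comp a sq2_contDiff.contDiffAt

lemma exists_C0 : ∃ C0 : ℝ, 0 ≤ C0 ∧ ∀ u : ℝ, |deriv Real.smoothTransition u| ≤ C0 := by
  have hc : Continuous (deriv Real.smoothTransition) := by
    have := Real.smoothTransition.contDiff (n := 1)
    exact this.continuous_deriv le_rfl
  obtain ⟨C, hC⟩ := (isCompact_Icc (a := (0:ℝ)) (b := 1)).exists_bound_of_continuousOn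
    (hc.continuousOn (s := Icc 0 1))
  refine ⟨max C 0, le_max_right _ _, fun u => ?_⟩
  rcases le_or_gt u 0 with hu | hu
  · rcases eq_or_lt_of_le hu with rfl | hu'
    · exact le_trans (by simpa using hC 0 (by norm_num)) (le_max_left _ _)
    · have : deriv Real.smoothTransition u = 0 := by
        have hev : Real.smoothTransition =ᶠ[nhds u] (fun _ => 0) := by
          filter_upwards [Iio_mem_nhds hu'] with b hb
          exact Real.smoothTransition.zero_of_nonpos (le_of_lt hb)
        rw [hev.deriv_eq, deriv_const]
      rw [this]; simp
  · rcases le_or_gt u 1 with hu1 | hu1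
    · exact le_trans (by simpa using hC u ⟨hu.le, hu1⟩) (le_max_left _ _)
    · have : deriv Real.smoothTransition u = 0 := by
        have hev : Real.smoothTransition =ᶠ[nhds u] (fun _ => 1) := by
          filter_upwards [Ioi_mem_nhds hu1] with b hb
          exact Real.smoothTransition.one_of_one_le (le_of_lt hb)
        rw [hev.deriv_eq, deriv_const]
      rw [this]; simp

lemma cut_hasDerivAt {S L : ℝ} (hS : 0 < S) (hL : 0 < L) (C0 : ℝ)
    (hC0 : ∀ u : ℝ, |deriv Real.smoothTransition u| ≤ C0) (s : ℝ) (hs : 0 ≤ s) :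
    ∃ d : ℝ, HasDerivAt (cut S L) d s ∧ |s * d| ≤ C0 / L := by
  have hC0' : 0 ≤ C0 := le_trans (abs_nonneg _) (hC0 0)
  rcases lt_or_ge s S with h | h
  · refine ⟨0, ?_, by simpa using div_nonneg hC0' hL.le⟩
    apply HasDerivAt.congr_of_eventuallyEq (hasDerivAt_const s (1:ℝ))
    filter_upwards [Ioo_mem_nhds (show -S < s by linarith) h] with u hu
    exact cut_eq_one hS hL (abs_le.mpr ⟨hu.1.le, hu.2.le⟩)
  · have hspos : 0 < s := lt_of_lt_of_le hS h
    set u₀ : ℝ := 1 - (Real.log s - Real.log S) / L with hu₀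
    have hst : HasDerivAt Real.smoothTransition (deriv Real.smoothTransition u₀) u₀ :=
      ((Real.smoothTransition.contDiff (n := 1)).differentiable (by simp)).differentiableAt.hasDerivAt
    have hinner : HasDerivAt (fun u : ℝ => 1 - (Real.log u - Real.log S) / L) (-(1/s / L)) s := by
      have := ((Real.hasDerivAt_log (ne_of_gt hspos)).sub_const (Real.log S)).div_const L
      simpa using this.const_sub 1
    have hcomp := hst.comp s hinner
    refine ⟨deriv Real.smoothTransition u₀ * -(1/s / L), ?_, ?_⟩
    · apply HasDerivAt.congr_of_eventuallyEq hcomp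
      filter_upwards [Ioi_mem_nhds hspos] with u hu
      unfold cut
      rw [Real.log_div (ne_of_gt hu) (ne_of_gt hS)]
      rfl
    · have : s * (deriv Real.smoothTransition u₀ * -(1/s / L)) =
          -(deriv Real.smoothTransition u₀ / L) := by
        field_simp
      rw [this, abs_neg, abs_div, abs_of_pos hL]
      gcongr
      exact hC0 u₀

/-- derivative of `fun q => cut S L (sq2 q)` with radial bound -/
lemma cut_sq2_fderiv {S L : ℝ} (hS : 0 < S) (hL : 0 < L) (C0 : ℝ)
    (hC0 : ∀ u : ℝ, |deriv Real.smoothTransition u| ≤ C0) (q : R2) :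
    ∃ D : R2 →L[ℝ] ℝ, HasFDerivAt (fun b : R2 => cut S L (sq2 b)) D q ∧
      |D q| ≤ 2 * C0 / L := by
  obtain ⟨d, hd, hbd⟩ := cut_hasDerivAt hS hL C0 hC0 (sq2 q) (sq2_nonneg q)
  refine ⟨d • ((2*q.1) • (ContinuousLinearMap.fst ℝ ℝ ℝ) + (2*q.2) • (ContinuousLinearMap.snd ℝ ℝ ℝ)), ?_, ?_⟩
  · exact hd.comp_hasFDerivAt q (hasFDerivAt_sq2 q)
  · have hval : (d • ((2*q.1) • (ContinuousLinearMap.fst ℝ ℝ ℝ) +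
        (2*q.2) • (ContinuousLinearMap.snd ℝ ℝ ℝ))) q = d * (2 * sq2 q) := by
      simp [sq2]
      ring
    rw [hval]
    have : |d * (2 * sq2 q)| = 2 * |sq2 q * d| := by
      rw [abs_mul, abs_mul]
      rw [abs_of_nonneg (sq2_nonneg q), abs_of_nonneg (show (0:ℝ) ≤ 2 by norm_num)]
      ring_nf
      rw [abs_mul, abs_of_nonneg (sq2_nonneg q)]
      ring
    rw [this]
    calc 2 * |sq2 q * d| ≤ 2 * (C0 / L) := by linarith [hbd]
      _ = 2 * C0 / L := by ring

/-! ### the maximum principle -/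

lemma no_interior_max (g h F : ℝ → ℝ) (η : ℝ) (hη : η ≠ 0)
    (hg : ∀ t ∈ Icc (0:ℝ) 1, HasDerivWithinAt g (2*η*h t) (Icc (0:ℝ) 1) t)
    (hh : ∀ t ∈ Icc (0:ℝ) 1, HasDerivWithinAt h (η * F t) (Icc (0:ℝ) 1) t)
    (B : ℝ) (hB0 : g 0 ≤ B) (hB1 : g 1 ≤ B)
    (hF : ∀ t ∈ Icc (0:ℝ) 1, B < g t → h t = 0 → 0 < F t) :
    ∀ t ∈ Icc (0:ℝ) 1, g t ≤ B := by
  by_contra hcon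
  push_neg at hcon
  obtain ⟨t₀, ht₀, hgt₀⟩ := hcon
  have gcont : ContinuousOn g (Icc (0:ℝ) 1) := fun t ht => (hg t ht).continuousWithinAt
  obtain ⟨ts, hts, hmax⟩ := isCompact_Icc.exists_isMaxOn ⟨0, by norm_num⟩ gcont
  have hmax' : ∀ x ∈ Icc (0:ℝ) 1, g x ≤ g ts := isMaxOn_iff.mp hmax
  have hgts : B < g ts := lt_of_lt_of_le hgt₀ (hmax' t₀ ht₀)
  have hts0 : ts ≠ 0 := by rintro rfl; exact absurd hgts (not_lt.mpr hB0)
  have hts1 : ts ≠ 1 := by rintro rfl; exact absurd hgts (not_lt.mpr hB1)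
  have h0ts : 0 < ts := lt_of_le_of_ne hts.1 (Ne.symm hts0)
  have hts1' : ts < 1 := lt_of_le_of_ne hts.2 hts1
  have hnhds : Icc (0:ℝ) 1 ∈ nhds ts := Icc_mem_nhds h0ts hts1'
  have hgd : HasDerivAt g (2*η*h ts) ts := (hg ts hts).hasDerivAt hnhds
  have hz : 2*η*h ts = 0 := (hmax.isLocalMax hnhds).hasDerivAt_eq_zero hgd
  have hhts : h ts = 0 := by
    rcases mul_eq_zero.mp hz with h' | h'
    · rcases mul_eq_zero.mp h' with h'' | h''
      · norm_num at h''
      · exact absurd h'' hη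
    · exact h'
  have hFpos : 0 < F ts := hF ts hts hgts hhts
  set k : ℝ → ℝ := fun t => η * h t with hk
  have hkts : k ts = 0 := by simp [hk, hhts]
  have hkd : HasDerivAt k (η * (η * F ts)) ts := ((hh ts hts).hasDerivAt hnhds).const_mul η
  have hkdpos : 0 < η * (η * F ts) := by
    have hη2 : 0 < η ^ 2 := pow_pos (abs_pos.mpr hη) 2 |>.trans_eq (by rw [sq_abs])
    nlinarith [hFpos, hη2]
  have hslope := hkd.hasDerivWithinAt (s := Ioi ts)
  rw [hasDerivWithinAt_iff_tendsto_slope] at hslope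
  have hsub : Ioi ts \ {ts} = Ioi ts := by
    apply diff_singleton_eq_self; simp
  rw [hsub] at hslope
  have hev : ∀ᶠ u in nhdsWithin ts (Ioi ts), 0 < slope k ts u :=
    hslope.eventually (eventually_gt_nhds hkdpos)
  obtain ⟨b, hb, hIoo⟩ := mem_nhdsGT_iff_exists_Ioo_subset.mp hev
  have hbts : ts < b := hb
  set m : ℝ := min b 1 with hm
  have hm1 : m ≤ 1 := min_le_right b 1
  have htsm : ts < m := lt_min hbts hts1'
  set τ : ℝ := (ts + m)/2 with hτ
  have hτ1 : τ < m := by rw [hτ]; linarith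
  have hτ0 : ts < τ := by rw [hτ]; linarith
  have hτIcc : τ ∈ Icc (0:ℝ) 1 := ⟨by linarith, le_trans hτ1.le hm1⟩
  have hkpos : ∀ u ∈ Ioo ts τ, 0 < k u := by
    intro u hu
    have hub : u < b := lt_of_lt_of_le (lt_trans hu.2 hτ1) (min_le_left _ _)
    have hsl : 0 < slope k ts u := hIoo ⟨hu.1, hub⟩
    have heq : slope k ts u = k u / (u - ts) := by
      rw [slope_def_field, hkts]; ring
    rw [heq] at hsl
    have hupos : 0 < u - ts := by linarith [hu.1]
    nlinarith [hsl, hupos, mul_pos hsl hupos, div_mul_cancel₀ (k u) (ne_of_gt hupos)]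
  have hmono : StrictMonoOn g (Icc ts τ) := by
    apply strictMonoOn_of_deriv_pos (convex_Icc ts τ)
    · exact gcont.mono (by intro u hu; exact ⟨le_trans hts.1 hu.1, le_trans hu.2 hτIcc.2⟩)
    · intro u hu
      rw [interior_Icc] at hu
      have huIcc : u ∈ Icc (0:ℝ) 1 := ⟨by linarith [hu.1, h0ts], by linarith [hu.2, hτIcc.2]⟩
      have hnu : Icc (0:ℝ) 1 ∈ nhds u :=
        Icc_mem_nhds (by linarith [hu.1, h0ts]) (by linarith [hu.2, hτ1, hm1])
      have hdu : HasDerivAt g (2*η*h u) u := (hg u huIcc).hasDerivAt hnu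
      rw [hdu.deriv]
      have h2 : 0 < η * h u := hkpos u hu
      nlinarith [h2]
  have : g ts < g τ := hmono (left_mem_Icc.mpr hτ0.le) (right_mem_Icc.mpr hτ0.le) hτ0
  exact absurd (hmax' τ hτIcc) (not_le.mpr this)

/-! ### pointwise positivity at interior critical points -/

lemma crit_core (c M₂ Q P s U A : ℝ) (hc : 0 < c) (hQc : c < Q) (hMQ : M₂ ≤ Q)
    (hP : P * Q = s^2) (hE : P / 2 + s = U) (hUc : c ≤ U) (hUM : U ≤ M₂)
    (hA : A < 4*c^2/(9*Q)) : A < P := by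
  have hQ0 : 0 < Q := lt_trans hc hQc
  have hPQ : s^2 + 2*Q*s = 2*Q*U := by linear_combination 2*Q*hE - hP
  rcases le_or_gt s 0 with hs | hs
  · have hs2 : s < -(2*Q) := by nlinarith
    have hP4 : 4*Q < P := by
      nlinarith [mul_pos (show (0:ℝ) < -(s+2*Q) by linarith) hQ0]
    calc A < 4*c^2/(9*Q) := hA
      _ ≤ 4*Q := by rw [div_le_iff₀ (by positivity)]; nlinarith
      _ < P := hP4
  · have hsU : s ≤ U := by nlinarith [sq_nonneg s]
    have hslb : 2*c/3 ≤ s := by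
      have h3 : s*(s+2*Q) ≤ s*(3*Q) := by
        apply mul_le_mul_of_nonneg_left (by linarith) hs.le
      nlinarith [h3]
    have hfin : 4*c^2/(9*Q) ≤ P := by
      rw [div_le_iff₀ (by positivity)]; nlinarith
    linarith

lemma crit_pos (c a' α M₂ Rc : ℝ) (hc : 0 < c) (ha' : 0 < a')
    (hRc1 : 1 ≤ Rc) (hRcM : M₂ ≤ Rc^2)
    (hnum : ∀ ρ : ℝ, Rc < ρ → 9 * a' * ρ^2 < 4 * c^2 * ρ ^ α)
    (q p : R2) (hρ : Rc < enorm2 q)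
    (hperp : inner2 q p = 0)
    (U : ℝ) (hUc : c ≤ U) (hUM : U ≤ M₂)
    (hE : sq2 p / 2 + (p.1 * q.2 - p.2 * q.1) = U)
    (D : ℝ) (hD : -(a' / enorm2 q ^ α) ≤ D) :
    0 < sq2 p + D := by
  have hρ0 : (1:ℝ) ≤ enorm2 q := le_trans hRc1 hρ.le
  have hρpos : 0 < enorm2 q := by linarith
  have hρ2 : enorm2 q ^ 2 = sq2 q := enorm2_sq q
  have hρ2Rc : Rc ^ 2 < sq2 q := by
    rw [← hρ2]; exact pow_lt_pow_left₀ hρ (le_trans zero_le_one hRc1) (by norm_num)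
  have hcM : c ≤ M₂ := le_trans hUc hUM
  have hsq2q : c < sq2 q := by nlinarith
  have hrpow_pos : 0 < enorm2 q ^ α := Real.rpow_pos_of_pos hρpos α
  have hkey : a' / enorm2 q ^ α < 4 * c^2 / (9 * sq2 q) := by
    have h9 := hnum (enorm2 q) hρ
    rw [div_lt_div_iff₀ hrpow_pos (by nlinarith [sq2_nonneg q])]
    calc a' * (9 * sq2 q) = 9 * a' * enorm2 q ^ 2 := by rw [hρ2]; ring
      _ < 4 * c^2 * enorm2 q ^ α := h9
  have hlag : sq2 p * sq2 q = (p.1 * q.2 - p.2 * q.1) ^ 2 := by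
    have h0 : q.1 * p.1 + q.2 * p.2 = 0 := hperp
    have hid : sq2 p * sq2 q = (p.1 * q.2 - p.2 * q.1)^2 + (q.1 * p.1 + q.2 * p.2)^2 := by
      unfold sq2; ring
    rw [hid, h0]; ring
  have := crit_core c M₂ (sq2 q) (sq2 p) (p.1 * q.2 - p.2 * q.1) U (a' / enorm2 q ^ α)
    hc hsq2q (by nlinarith) hlag hE hUc hUM hkey
  linarith

/-! ### the a priori bound for chords -/

lemma core (c a' α M₂ Rc : ℝ) (hc : 0 < c) (ha' : 0 < a')
    (hRc1 : 1 ≤ Rc) (hRcM : M₂ ≤ Rc^2)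
    (hnum : ∀ ρ : ℝ, Rc < ρ → 9 * a' * ρ^2 < 4 * c^2 * ρ ^ α)
    (U : R2 → ℝ) (hU : Differentiable ℝ U)
    (hUc : ∀ q, c ≤ U q) (hUM : ∀ q, U q ≤ M₂)
    (hUrad : ∀ q : R2, Rc < enorm2 q → -(a' / enorm2 q ^ α) ≤ fderiv ℝ U q q)
    (q0 q1 : R2) (hq01 : q0 ≠ q1) (η : ℝ) (v : ℝ → Phase)
    (hv : IsChord (fun x => H0 x - U x.1) 0 q0 q1 η v) :
    ∀ t ∈ Icc (0:ℝ) 1, sq2 (v t).1 ≤ max (Rc^2) (max (sq2 q0) (sq2 q1)) := by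
  obtain ⟨hv0, hv1, hder, hen⟩ := hv
  have hη : η ≠ 0 := by
    rintro rfl
    have hz : ∀ t ∈ Icc (0:ℝ) 1, HasDerivWithinAt v ((fun _ : ℝ => (0:Phase)) t) (Icc (0:ℝ) 1) t := by
      intro t ht
      simpa [zero_smul] using hder t ht
    have := norm_image_sub_le_of_norm_deriv_le_segment' hz
      (C := 0) (by intro x hx; simp) 1 (by norm_num)
    have hv10 : v 1 = v 0 := by
      have h1 : ‖v 1 - v 0‖ ≤ 0 := by simpa using this
      exact sub_eq_zero.mp (norm_le_zero_iff.mp h1)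
    apply hq01
    rw [← hv0, ← hv1, hv10]
  have hcomp : ∀ t ∈ Icc (0:ℝ) 1,
      HasDerivWithinAt (fun s => (v s).1.1) (η * ((v t).2.1 + (v t).1.2)) (Icc (0:ℝ) 1) t ∧
      HasDerivWithinAt (fun s => (v s).1.2) (η * ((v t).2.2 - (v t).1.1)) (Icc (0:ℝ) 1) t ∧
      HasDerivWithinAt (fun s => (v s).2.1) (η * ((v t).2.2 + fderiv ℝ U (v t).1 (1,0))) (Icc (0:ℝ) 1) t ∧
      HasDerivWithinAt (fun s => (v s).2.2) (η * (-(v t).2.1 + fderiv ℝ U (v t).1 (0,1))) (Icc (0:ℝ) 1) t := by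
    intro t ht
    have hvt := hder t ht
    refine ⟨?_, ?_, ?_, ?_⟩
    · have := Pq1.hasFDerivAt.comp_hasDerivWithinAt t hvt
      simpa [Function.comp_def, XH_HU U hU, smul_eq_mul] using this
    · have := Pq2.hasFDerivAt.comp_hasDerivWithinAt t hvt
      simpa [Function.comp_def, XH_HU U hU, smul_eq_mul] using this
    · have := Pp1.hasFDerivAt.comp_hasDerivWithinAt t hvt
      simpa [Function.comp_def, XH_HU U hU, smul_eq_mul] using this
    · have := Pp2.hasFDerivAt.comp_hasDerivWithinAt t hvt
      simpa [Function.comp_def, XH_HU U hU, smul_eq_mul] using this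
  set g : ℝ → ℝ := fun s => sq2 (v s).1 with hgdef
  set h : ℝ → ℝ := fun s => inner2 (v s).1 (v s).2 with hhdef
  set F : ℝ → ℝ := fun s => sq2 (v s).2 + fderiv ℝ U (v s).1 ((v s).1) with hFdef
  have hg : ∀ t ∈ Icc (0:ℝ) 1, HasDerivWithinAt g (2*η*h t) (Icc (0:ℝ) 1) t := by
    intro t ht
    obtain ⟨hq1, hq2, hp1, hp2⟩ := hcomp t ht
    have hgeq : g = fun s => (v s).1.1*(v s).1.1 + (v s).1.2*(v s).1.2 := by
      funext s; simp only [hgdef]; unfold sq2; ring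
    rw [hgeq]
    have hd := (hq1.mul hq1).add (hq2.mul hq2)
    refine hd.congr_deriv ?_
    simp only [hhdef]; unfold inner2; ring
  have hh : ∀ t ∈ Icc (0:ℝ) 1, HasDerivWithinAt h (η * F t) (Icc (0:ℝ) 1) t := by
    intro t ht
    obtain ⟨hq1, hq2, hp1, hp2⟩ := hcomp t ht
    have hheq : h = fun s => (v s).1.1*(v s).2.1 + (v s).1.2*(v s).2.2 := by
      funext s; simp only [hhdef]; unfold inner2; rfl
    rw [hheq]
    have hd := (hq1.mul hp1).add (hq2.mul hp2)
    refine hd.congr_deriv ?_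
    simp only [hFdef]
    rw [clm_eval (fderiv ℝ U (v t).1) ((v t).1)]
    unfold sq2; ring
  set B : ℝ := max (Rc^2) (max (sq2 q0) (sq2 q1)) with hBdef
  have hB0 : g 0 ≤ B := by
    simp only [hgdef, hv0, hBdef]
    exact le_max_of_le_right (le_max_left _ _)
  have hB1 : g 1 ≤ B := by
    simp only [hgdef, hv1, hBdef]
    exact le_max_of_le_right (le_max_right _ _)
  have hF : ∀ t ∈ Icc (0:ℝ) 1, B < g t → h t = 0 → 0 < F t := by
    intro t ht hgt hht
    have hRc2 : Rc^2 < sq2 (v t).1 := lt_of_le_of_lt (le_max_left _ _) hgt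
    have hRcpos : (0:ℝ) ≤ Rc := le_trans zero_le_one hRc1
    have hρ : Rc < enorm2 (v t).1 := by
      have : Real.sqrt (Rc^2) < Real.sqrt (sq2 (v t).1) :=
        Real.sqrt_lt_sqrt (by positivity) hRc2
      rwa [Real.sqrt_sq hRcpos] at this
    have hE : sq2 (v t).2 / 2 + ((v t).2.1 * (v t).1.2 - (v t).2.2 * (v t).1.1) = U (v t).1 := by
      have := hen t ht
      simp only [sub_eq_zero] at this
      unfold sq2
      unfold H0 at this
      linarith [this]
    exact crit_pos c a' α M₂ Rc hc ha' hRc1 hRcM hnum (v t).1 (v t).2 hρ hht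
      (U (v t).1) (hUc _) (hUM _) hE _ (hUrad _ hρ)
  exact no_interior_max g h F η hη hg hh B hB0 hB1 hF

/-! ### chord transfer lemmas -/

lemma isChord_congr {H1 H2 : Phase → ℝ} {e : ℝ} {q0 q1 : R2} {η : ℝ} {v : ℝ → Phase}
    {O : Set Phase} (hO : IsOpen O) (heq : EqOn H1 H2 O)
    (hmem : ∀ t ∈ Icc (0:ℝ) 1, v t ∈ O)
    (h : IsChord H1 e q0 q1 η v) : IsChord H2 e q0 q1 η v := by
  obtain ⟨h0, h1, hd, he⟩ := h
  refine ⟨h0, h1, fun t ht => ?_, fun t ht => ?_⟩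
  · have hXH : XH H1 (v t) = XH H2 (v t) := by
      have hfd : fderiv ℝ H1 (v t) = fderiv ℝ H2 (v t) := by
        apply Filter.EventuallyEq.fderiv_eq
        filter_upwards [hO.mem_nhds (hmem t ht)] with b hb
        exact heq hb
      unfold XH; rw [hfd]
    rw [← hXH]; exact hd t ht
  · rw [← heq (hmem t ht)]; exact he t ht

lemma isChord_shift (U : R2 → ℝ) (k e : ℝ) (q0 q1 : R2) (η : ℝ) (v : ℝ → Phase) :
    IsChord (fun x => H0 x - U x.1) e q0 q1 η v ↔
      IsChord (fun x => H0 x - (U x.1 + k)) (e - k) q0 q1 η v := by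
  have hfun : (fun x : Phase => H0 x - (U x.1 + k)) = fun x => (H0 x - U x.1) - k := by
    funext x; ring
  have hXH : ∀ x, XH (fun y : Phase => H0 y - (U y.1 + k)) x = XH (fun y => H0 y - U y.1) x := by
    intro x
    unfold XH
    rw [hfun, fderiv_sub_const]
  constructor
  · rintro ⟨h0, h1, hd, he⟩
    refine ⟨h0, h1, fun t ht => by rw [hXH]; exact hd t ht, fun t ht => by
      have := he t ht; dsimp only at this ⊢; linarith⟩
  · rintro ⟨h0, h1, hd, he⟩
    refine ⟨h0, h1, fun t ht => by rw [← hXH]; exact hd t ht, fun t ht => by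
      have := he t ht; dsimp only at this ⊢; linarith⟩

lemma pbound (x : Phase) (W : ℝ) (hE : H0 x = W) : sq2 x.2 ≤ 4*W + 4*sq2 x.1 := by
  unfold H0 at hE
  unfold sq2
  nlinarith [sq_nonneg (x.2.1 + 2*x.1.2), sq_nonneg (x.2.2 - 2*x.1.1)]

lemma exists_Rc (c a' α r0 M₂ : ℝ) (hc : 0 < c) (ha' : 0 < a') (hr0 : 0 < r0) (hM₂ : 0 ≤ M₂)
    (hcase : (α = 2 ∧ 9*a' < 4*c^2) ∨ 2 < α) :
    ∃ Rc : ℝ, 1 ≤ Rc ∧ r0 ≤ Rc ∧ M₂ ≤ Rc^2 ∧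
      ∀ ρ : ℝ, Rc < ρ → 9*a'*ρ^2 < 4*c^2*ρ^α := by
  rcases hcase with ⟨rfl, hnum⟩ | hα
  · refine ⟨max 1 (max r0 (Real.sqrt M₂)), le_max_left _ _,
      le_trans (le_max_left _ _) (le_max_right _ _), ?_, ?_⟩
    · have h1 : Real.sqrt M₂ ≤ max 1 (max r0 (Real.sqrt M₂)) :=
        le_trans (le_max_right _ _) (le_max_right _ _)
      have h2 : Real.sqrt M₂ ^ 2 = M₂ := Real.sq_sqrt hM₂
      nlinarith [Real.sqrt_nonneg M₂]
    · intro ρ hρ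
      have hρ1 : (1:ℝ) < ρ := lt_of_le_of_lt (le_max_left _ _) hρ
      have hρpos : (0:ℝ) < ρ := by linarith
      have : ρ ^ (2:ℝ) = ρ ^ (2:ℕ) := by
        rw [← Real.rpow_natCast ρ 2]; norm_num
      rw [this]
      nlinarith [sq_nonneg ρ, pow_pos hρpos 2]
  · set K : ℝ := (9*a'/(4*c^2)) ^ (α-2)⁻¹ with hK
    have hKnn : 0 ≤ K := Real.rpow_nonneg (by positivity) _
    refine ⟨max 1 (max r0 (max (Real.sqrt M₂) K)), le_max_left _ _,
      le_trans (le_max_left _ _) (le_max_right _ _), ?_, ?_⟩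
    · have h1 : Real.sqrt M₂ ≤ max 1 (max r0 (max (Real.sqrt M₂) K)) :=
        le_trans (le_trans (le_max_left _ _) (le_max_right _ _)) (le_max_right _ _)
      have h2 : Real.sqrt M₂ ^ 2 = M₂ := Real.sq_sqrt hM₂
      nlinarith [Real.sqrt_nonneg M₂]
    · intro ρ hρ
      have hρ1 : (1:ℝ) < ρ := lt_of_le_of_lt (le_max_left _ _) hρ
      have hρpos : (0:ℝ) < ρ := by linarith
      have hKρ : K < ρ :=
        lt_of_le_of_lt (le_trans (le_trans (le_max_right _ _) (le_max_right _ _)) (le_max_right _ _)) hρ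
      have hsplit : ρ ^ α = ρ ^ (2:ℝ) * ρ ^ (α - 2) := by
        rw [← Real.rpow_add hρpos]; norm_num
      have hKpow : K ^ (α - 2) = 9*a'/(4*c^2) :=
        Real.rpow_inv_rpow (by positivity) (by linarith)
      have hmono : K ^ (α-2) < ρ ^ (α-2) := Real.rpow_lt_rpow hKnn hKρ (by linarith)
      have h2 : ρ ^ (2:ℝ) = ρ ^ (2:ℕ) := by
        rw [← Real.rpow_natCast ρ 2]; norm_num
      rw [hsplit, h2]
      have hlt : 9*a'/(4*c^2) < ρ ^ (α-2) := by rw [← hKpow]; exact hmono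
      have h4c : (0:ℝ) < 4*c^2 := by positivity
      rw [div_lt_iff₀ h4c] at hlt
      have hρ2 : (0:ℝ) < ρ ^ (2:ℕ) := pow_pos hρpos 2
      calc 9*a'*ρ^(2:ℕ) < (ρ ^ (α-2) * (4*c^2)) * ρ^(2:ℕ) := by nlinarith
        _ = 4*c^2*(ρ^(2:ℕ) * ρ^(α-2)) := by ring

lemma exists_M (V : R2 → ℝ) (hV : Continuous V) (a α r0 : ℝ) (hr0 : 0 < r0) (ha : 0 < a)
    (hα : 0 ≤ α) (hd : ∀ q : R2, r0 < enorm2 q → V q ≤ a / enorm2 q ^ α) :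
    ∃ M : ℝ, 0 ≤ M ∧ ∀ q, V q ≤ M := by
  obtain ⟨C, hC⟩ := (isCompact_closedBall (0:R2) r0).exists_bound_of_continuousOn
    (hV.continuousOn)
  refine ⟨max (max C (a / r0 ^ α)) 0, le_max_right _ _, fun q => ?_⟩
  rcases le_or_gt (enorm2 q) r0 with h | h
  · have hq : q ∈ Metric.closedBall (0:R2) r0 := by
      rw [Metric.mem_closedBall, dist_zero_right]
      exact le_trans (norm_le_enorm2 q) h
    calc V q ≤ |V q| := le_abs_self _
      _ ≤ C := hC q hq
      _ ≤ _ := le_trans (le_max_left _ _) (le_max_left _ _)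
  · have h1 : V q ≤ a / enorm2 q ^ α := hd q h
    have h2 : a / enorm2 q ^ α ≤ a / r0 ^ α := by
      apply div_le_div_of_nonneg_left ha.le (Real.rpow_pos_of_pos hr0 α)
        (Real.rpow_le_rpow hr0.le h.le hα)
    calc V q ≤ a / r0 ^ α := le_trans h1 h2
      _ ≤ _ := le_trans (le_max_right _ _) (le_max_left _ _)
set_option maxHeartbeats 1000000 in
/-- For `q₀ ≠ q₁`, `c > 0` and a smooth nonnegative potential `V` with the decay conditions
of Proposition `CritH=CritH1`, there exists `V₀ ∈ 𝓗` (smooth, `dV₀` compactly supported,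
`V₀ > 0`, `V₀ − dV₀(p∂ₚ) > 0`) such that the chords of `H₀ − V` at energy `c` from `q₀` to
`q₁` coincide with the chords of `H₀ − V₀` at energy `0`. -/
theorem stmt19 (c : ℝ) (hc : 0 < c) (q0 q1 : R2) (hq : q0 ≠ q1)
    (V : R2 → ℝ) (hVsm : ContDiff ℝ (⊤ : ℕ∞) V) (hVnn : ∀ q, 0 ≤ V q)
    (r0 α a : ℝ) (hr0 : 0 < r0)
    (hαa : (α = 2 ∧ 0 < a ∧ a < c ^ 2 / 4) ∨ (2 < α ∧ 0 < a))
    (hdecay : ∀ q : R2, r0 < enorm2 q →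
      V q ≤ a / enorm2 q ^ α ∧
        -(a / enorm2 q ^ (α + 1)) ≤ fderiv ℝ V q q / enorm2 q) :
    ∃ V0 : Phase → ℝ, ContDiff ℝ (⊤ : ℕ∞) V0 ∧
      HasCompactSupport (fun x => fderiv ℝ V0 x) ∧
      (∀ x, 0 < V0 x) ∧
      (∀ x : Phase, 0 < V0 x - fderiv ℝ V0 x ((0, 0), x.2)) ∧
      ∀ (η : ℝ) (v : ℝ → Phase),
        IsChord (fun x => H0 x - V x.1) c q0 q1 η v ↔
          IsChord (fun x => H0 x - V0 x) 0 q0 q1 η v := by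
  classical
  have hVd : Differentiable ℝ V := hVsm.differentiable (by simp)
  have hα0 : (0:ℝ) ≤ α := by rcases hαa with ⟨h, _⟩ | ⟨h, _⟩ <;> linarith
  have ha : 0 < a := by rcases hαa with ⟨_, h, _⟩ | ⟨_, h⟩ <;> exact h
  have hdec1 : ∀ q : R2, r0 < enorm2 q → V q ≤ a / enorm2 q ^ α := fun q h => (hdecay q h).1
  have hdec2 : ∀ q : R2, r0 < enorm2 q → -(a / enorm2 q ^ α) ≤ fderiv ℝ V q q := by
    intro q h
    have h2 := (hdecay q h).2
    have hρpos : 0 < enorm2 q := lt_trans hr0 h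
    have hne : enorm2 q ≠ 0 := ne_of_gt hρpos
    have hsplit : enorm2 q ^ (α+1) = enorm2 q ^ α * enorm2 q := Real.rpow_add_one hne α
    have hαpos : 0 < enorm2 q ^ α := Real.rpow_pos_of_pos hρpos α
    have hmul := mul_le_mul_of_nonneg_right h2 hρpos.le
    rw [div_mul_cancel₀ _ hne] at hmul
    calc -(a / enorm2 q ^ α) = -(a / enorm2 q ^ (α+1)) * enorm2 q := by
          rw [hsplit]; field_simp
      _ ≤ fderiv ℝ V q q := hmul
  obtain ⟨M, hM0, hMV⟩ := exists_M V hVsm.continuous a α r0 hr0 ha hα0 hdec1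
  obtain ⟨C0, hC00, hC0⟩ := exists_C0
  obtain ⟨a', ha'def⟩ : ∃ _x : ℝ, _x = 3/2 * a := ⟨_, rfl⟩
  have ha' : 0 < a' := by rw [ha'def]; linarith
  have haa' : a ≤ a' := by rw [ha'def]; linarith
  obtain ⟨M₂, hM₂def⟩ : ∃ _x : ℝ, _x = c + M := ⟨_, rfl⟩
  have hM₂0 : (0:ℝ) ≤ M₂ := by rw [hM₂def]; linarith
  have hcase : (α = 2 ∧ 9*a' < 4*c^2) ∨ 2 < α := by
    rcases hαa with ⟨h1, h2, h3⟩ | ⟨h1, _⟩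
    · left; exact ⟨h1, by rw [ha'def]; nlinarith⟩
    · right; exact h1
  obtain ⟨Rc, hRc1, hRcr0, hRcM, hnum⟩ := exists_Rc c a' α r0 M₂ hc ha' hr0 hM₂0 hcase
  obtain ⟨B2, hB2def⟩ : ∃ _x : ℝ, _x = max (Rc^2) (max (sq2 q0) (sq2 q1)) := ⟨_, rfl⟩
  have hB2pos : (1:ℝ) ≤ B2 := by
    rw [hB2def]
    exact le_trans (by nlinarith [hRc1]) (le_max_left _ _)
  obtain ⟨Sq, hSqdef⟩ : ∃ _x : ℝ, _x = B2 + 1 := ⟨_, rfl⟩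
  have hSqpos : (0:ℝ) < Sq := by rw [hSqdef]; linarith
  obtain ⟨Lq, hLqdef⟩ : ∃ _x : ℝ, _x = 4*C0 + 1 := ⟨_, rfl⟩
  have hLqpos : (0:ℝ) < Lq := by rw [hLqdef]; linarith
  obtain ⟨Bq, hBqdef⟩ : ∃ _x : ℝ, _x = Sq * Real.exp Lq := ⟨_, rfl⟩
  have hSqBq : Sq ≤ Bq := by
    rw [hBqdef]
    nlinarith [Real.one_le_exp hLqpos.le, hSqpos]
  have hBqpos : (0:ℝ) < Bq := lt_of_lt_of_le hSqpos hSqBq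
  obtain ⟨S1, hS1def⟩ : ∃ _x : ℝ, _x = 4*(c+M) + 4*Bq + 1 := ⟨_, rfl⟩
  have hS1pos : (0:ℝ) < S1 := by rw [hS1def]; nlinarith
  obtain ⟨L3, hL3def⟩ : ∃ _x : ℝ, _x = 2*C0*M/c + 1 := ⟨_, rfl⟩
  have hL3pos : (0:ℝ) < L3 := by rw [hL3def]; positivity
  obtain ⟨Bp, hBpdef⟩ : ∃ _x : ℝ, _x = S1 * Real.exp L3 := ⟨_, rfl⟩
  have hBppos : (0:ℝ) < Bp := by rw [hBpdef]; positivity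
  obtain ⟨χ, hχdef⟩ : ∃ _x : R2 → ℝ, _x = fun q => cut Sq Lq (sq2 q) := ⟨_, rfl⟩
  obtain ⟨ψ, hψdef⟩ : ∃ _x : R2 → ℝ, _x = fun p => cut S1 L3 (sq2 p) := ⟨_, rfl⟩
  obtain ⟨W, hWdef⟩ : ∃ _x : R2 → ℝ, _x = fun q => c + V q * χ q := ⟨_, rfl⟩
  obtain ⟨V0, hV0def⟩ : ∃ _x : Phase → ℝ, _x = fun x => c + V x.1 * (χ x.1 * ψ x.2) := ⟨_, rfl⟩
  -- values of the cutoffs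
  have hχ1 : ∀ b : R2, sq2 b < Sq → χ b = 1 := by
    intro b hb; rw [hχdef]
    exact cut_eq_one hSqpos hLqpos (by rw [abs_of_nonneg (sq2_nonneg b)]; exact hb.le)
  have hχ0 : ∀ b : R2, Bq < sq2 b → χ b = 0 := by
    intro b hb; rw [hχdef]
    have hBqs : Bq ≤ sq2 b := le_of_lt hb
    rw [hBqdef] at hBqs
    exact cut_eq_zero hSqpos hLqpos hBqs
  have hψ1 : ∀ b : R2, sq2 b < S1 → ψ b = 1 := by
    intro b hb; rw [hψdef]
    exact cut_eq_one hS1pos hL3pos (by rw [abs_of_nonneg (sq2_nonneg b)]; exact hb.le)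
  have hψ0 : ∀ b : R2, Bp < sq2 b → ψ b = 0 := by
    intro b hb; rw [hψdef]
    have hBps : Bp ≤ sq2 b := le_of_lt hb
    rw [hBpdef] at hBps
    exact cut_eq_zero hS1pos hL3pos hBps
  have hχr : ∀ b : R2, 0 ≤ χ b ∧ χ b ≤ 1 := by
    intro b; rw [hχdef]; exact ⟨cut_nonneg _ _ _, cut_le_one _ _ _⟩
  have hψr : ∀ b : R2, 0 ≤ ψ b ∧ ψ b ≤ 1 := by
    intro b; rw [hψdef]; exact ⟨cut_nonneg _ _ _, cut_le_one _ _ _⟩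
  have hχsm : ContDiff ℝ (⊤:ℕ∞) χ := by rw [hχdef]; exact cut_sq2_contDiff hSqpos hLqpos
  have hψsm : ContDiff ℝ (⊤:ℕ∞) ψ := by rw [hψdef]; exact cut_sq2_contDiff hS1pos hL3pos
  -- bounds on V0 and W
  have hV0c : ∀ x : Phase, c ≤ V0 x := by
    intro x
    have := mul_nonneg (hVnn x.1) (mul_nonneg (hχr x.1).1 (hψr x.2).1)
    rw [hV0def]; dsimp only; linarith
  have hV0M : ∀ x : Phase, V0 x ≤ c + M := by
    intro x
    have h1 : V x.1 * (χ x.1 * ψ x.2) ≤ V x.1 * 1 :=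
      mul_le_mul_of_nonneg_left (mul_le_one₀ (hχr x.1).2 (hψr x.2).1 (hψr x.2).2) (hVnn x.1)
    rw [hV0def]; dsimp only
    have := hMV x.1
    linarith
  have hWc : ∀ b : R2, c ≤ W b := by
    intro b
    have := mul_nonneg (hVnn b) (hχr b).1
    rw [hWdef]; dsimp only; linarith
  have hWM : ∀ b : R2, W b ≤ M₂ := by
    intro b
    have h1 : V b * χ b ≤ V b * 1 := mul_le_mul_of_nonneg_left (hχr b).2 (hVnn b)
    have := hMV b
    rw [hWdef, hM₂def]; dsimp only; linarith
  have hWd : Differentiable ℝ W := by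
    rw [hWdef]
    exact (differentiable_const c).add (hVd.mul (hχsm.differentiable (by simp)))
  -- radial estimate for W
  have hWrad : ∀ q : R2, Rc < enorm2 q → -(a' / enorm2 q ^ α) ≤ fderiv ℝ W q q := by
    intro q hq'
    have hqr0 : r0 < enorm2 q := lt_of_le_of_lt hRcr0 hq'
    have hρpos : 0 < enorm2 q := lt_trans hr0 hqr0
    have hαpos : 0 < enorm2 q ^ α := Real.rpow_pos_of_pos hρpos α
    obtain ⟨Dχ, hDχ, hDχbd⟩ := cut_sq2_fderiv hSqpos hLqpos C0 hC0 q
    have hDχ' : HasFDerivAt χ Dχ q := by rw [hχdef]; exact hDχ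
    have hWfd : HasFDerivAt W (V q • Dχ + χ q • fderiv ℝ V q) q := by
      rw [hWdef]
      exact ((hVd q).hasFDerivAt.mul hDχ').const_add c
    rw [hWfd.fderiv]
    have hval : (V q • Dχ + χ q • fderiv ℝ V q) q = V q * Dχ q + χ q * fderiv ℝ V q q := by
      simp
    rw [hval]
    have hVb : V q ≤ a / enorm2 q ^ α := hdec1 q hqr0
    have hfb : -(a / enorm2 q ^ α) ≤ fderiv ℝ V q q := hdec2 q hqr0
    have hapos : 0 < a / enorm2 q ^ α := div_pos ha hαpos
    have hDχ2 : |Dχ q| ≤ 1/2 := by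
      refine le_trans hDχbd ?_
      rw [div_le_iff₀ hLqpos, hLqdef]
      linarith
    have h1 : -((a / enorm2 q ^ α) * (1/2)) ≤ V q * Dχ q := by
      have habs : |V q * Dχ q| ≤ (a / enorm2 q ^ α) * (1/2) := by
        rw [abs_mul]
        apply mul_le_mul _ hDχ2 (abs_nonneg _) hapos.le
        rw [abs_of_nonneg (hVnn q)]; exact hVb
      linarith [neg_abs_le (V q * Dχ q), abs_le.mp habs]
    have h2 : -(a / enorm2 q ^ α) ≤ χ q * fderiv ℝ V q q := by
      rcases le_or_gt 0 (fderiv ℝ V q q) with hf | hf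
      · have := mul_nonneg (hχr q).1 hf
        linarith
      · have h3 : (1:ℝ) * fderiv ℝ V q q ≤ χ q * fderiv ℝ V q q :=
          mul_le_mul_of_nonpos_right (hχr q).2 hf.le
        rw [one_mul] at h3
        linarith
    have heq : a' / enorm2 q ^ α = (3/2) * (a / enorm2 q ^ α) := by
      rw [ha'def]; ring
    rw [heq]
    linarith
  -- radial estimate for V + c
  have hVcrad : ∀ q : R2, Rc < enorm2 q →
      -(a' / enorm2 q ^ α) ≤ fderiv ℝ (fun b => V b + c) q q := by
    intro q hq'
    have hqr0 : r0 < enorm2 q := lt_of_le_of_lt hRcr0 hq'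
    have hρpos : 0 < enorm2 q := lt_trans hr0 hqr0
    have hαpos : 0 < enorm2 q ^ α := Real.rpow_pos_of_pos hρpos α
    rw [fderiv_add_const]
    refine le_trans ?_ (hdec2 q hqr0)
    have : a / enorm2 q ^ α ≤ a' / enorm2 q ^ α :=
      by gcongr
    linarith
  -- the three Hamiltonians
  obtain ⟨Hv, hHvdef⟩ : ∃ _x : Phase → ℝ, _x = fun x => H0 x - V x.1 := ⟨_, rfl⟩
  obtain ⟨Hvc, hHvcdef⟩ : ∃ _x : Phase → ℝ, _x = fun x => H0 x - (V x.1 + c) := ⟨_, rfl⟩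
  obtain ⟨HW, hHWdef⟩ : ∃ _x : Phase → ℝ, _x = fun x => H0 x - W x.1 := ⟨_, rfl⟩
  obtain ⟨HV0, hHV0def⟩ : ∃ _x : Phase → ℝ, _x = fun x => H0 x - V0 x := ⟨_, rfl⟩
  -- open sets
  have hContq : Continuous fun x : Phase => sq2 x.1 :=
    sq2_contDiff.continuous.comp continuous_fst
  have hContp : Continuous fun x : Phase => sq2 x.2 :=
    sq2_contDiff.continuous.comp continuous_snd
  obtain ⟨O1, hO1def⟩ : ∃ _x : Set Phase, _x = {x : Phase | sq2 x.1 < Sq} ∩ {x : Phase | sq2 x.2 < S1} := ⟨_, rfl⟩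
  obtain ⟨O, hOdef⟩ : ∃ _x : Set Phase, _x = {x : Phase | sq2 x.2 < S1} ∪ {x : Phase | Bq < sq2 x.1} := ⟨_, rfl⟩
  have hO1open : IsOpen O1 := by
    rw [hO1def]
    exact (isOpen_lt hContq continuous_const).inter (isOpen_lt hContp continuous_const)
  have hOopen : IsOpen O := by
    rw [hOdef]
    exact (isOpen_lt hContp continuous_const).union (isOpen_lt continuous_const hContq)
  -- function agreements
  have hEq1 : EqOn Hvc HV0 O1 := by
    intro x hx
    rw [hO1def] at hx
    rw [hHvcdef, hHV0def, hV0def]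
    dsimp only
    rw [hχ1 x.1 hx.1, hψ1 x.2 hx.2]
    ring_nf
  have hEqW : EqOn HV0 HW O := by
    intro x hx
    rw [hOdef] at hx
    rw [hHV0def, hHWdef, hV0def, hWdef]
    dsimp only
    rcases hx with hx | hx
    · rw [hψ1 x.2 hx]; ring_nf
    · rw [hχ0 x.1 hx]; ring_nf
  have hEq2 : EqOn HW Hvc O1 := by
    intro x hx
    rw [hO1def] at hx
    rw [hHvcdef, hHWdef, hWdef]
    dsimp only
    rw [hχ1 x.1 hx.1]
    ring_nf
  -- core applied to V + c
  have hcoreVc : ∀ (η : ℝ) (v : ℝ → Phase), IsChord Hvc 0 q0 q1 η v →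
      ∀ t ∈ Icc (0:ℝ) 1, sq2 (v t).1 ≤ B2 := by
    intro η v hv
    rw [hB2def]
    refine core c a' α M₂ Rc hc ha' hRc1 hRcM hnum (fun b => V b + c)
      (hVd.add_const c) (fun b => by have := hVnn b; linarith)
      (fun b => by have := hMV b; rw [hM₂def]; linarith)
      hVcrad q0 q1 hq η v ?_
    rw [hHvcdef] at hv
    exact hv
  -- core applied to W
  have hcoreW : ∀ (η : ℝ) (v : ℝ → Phase), IsChord HW 0 q0 q1 η v →
      ∀ t ∈ Icc (0:ℝ) 1, sq2 (v t).1 ≤ B2 := by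
    intro η v hv
    rw [hB2def]
    refine core c a' α M₂ Rc hc ha' hRc1 hRcM hnum W hWd hWc hWM hWrad q0 q1 hq η v ?_
    rw [hHWdef] at hv
    exact hv
  -- membership in O1 for chords of Hvc
  have hmemO1Vc : ∀ (η : ℝ) (v : ℝ → Phase), IsChord Hvc 0 q0 q1 η v →
      ∀ t ∈ Icc (0:ℝ) 1, v t ∈ O1 := by
    intro η v hv t ht
    have hb := hcoreVc η v hv t ht
    have hen : H0 (v t) = V (v t).1 + c := by
      have := hv.2.2.2 t ht
      rw [hHvcdef] at this
      dsimp only at this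
      linarith
    have hp := pbound (v t) _ hen
    rw [hO1def]
    constructor
    · show sq2 (v t).1 < Sq
      rw [hSqdef]; linarith
    · show sq2 (v t).2 < S1
      have hVle := hMV (v t).1
      rw [hS1def]
      have hB2Bq : B2 ≤ Bq := by
        have : B2 < Sq := by rw [hSqdef]; linarith
        linarith
      linarith
  -- membership in O1 for chords of HW
  have hmemO1W : ∀ (η : ℝ) (v : ℝ → Phase), IsChord HW 0 q0 q1 η v →
      ∀ t ∈ Icc (0:ℝ) 1, v t ∈ O1 := by
    intro η v hv t ht
    have hb := hcoreW η v hv t ht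
    have hen : H0 (v t) = W (v t).1 := by
      have := hv.2.2.2 t ht
      rw [hHWdef] at this
      dsimp only at this
      linarith
    have hp := pbound (v t) _ hen
    have hWle := hWM (v t).1
    rw [hO1def]
    constructor
    · show sq2 (v t).1 < Sq
      rw [hSqdef]; linarith
    · show sq2 (v t).2 < S1
      rw [hS1def]
      have hB2Bq : B2 ≤ Bq := by
        have : B2 < Sq := by rw [hSqdef]; linarith
        linarith
      rw [hM₂def] at hWle
      linarith
  -- membership in O for chords of HV0
  have hmemO : ∀ (η : ℝ) (v : ℝ → Phase), IsChord HV0 0 q0 q1 η v →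
      ∀ t ∈ Icc (0:ℝ) 1, v t ∈ O := by
    intro η v hv t ht
    rw [hOdef]
    rcases lt_or_ge Bq (sq2 (v t).1) with hcase2 | hcase2
    · right; exact hcase2
    · left
      have hen : H0 (v t) = V0 (v t) := by
        have := hv.2.2.2 t ht
        rw [hHV0def] at this
        dsimp only at this
        linarith
      have hp := pbound (v t) _ hen
      have hle := hV0M (v t)
      show sq2 (v t).2 < S1
      rw [hS1def]
      linarith
  refine ⟨V0, ?_, ?_, ?_, ?_, ?_⟩
  · -- smoothness
    rw [hV0def]
    apply ContDiff.add contDiff_const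
    exact (hVsm.comp contDiff_fst).mul
      ((hχsm.comp contDiff_fst).mul (hψsm.comp contDiff_snd))
  · -- compact support of dV0
    apply HasCompactSupport.intro
      ((isCompact_closedBall (0:R2) (Real.sqrt Bq)).prod
        (isCompact_closedBall (0:R2) (Real.sqrt Bp)))
    intro x hx
    have hxcase : Bq < sq2 x.1 ∨ Bp < sq2 x.2 := by
      rw [Set.mem_prod] at hx
      push_neg at hx
      rcases Classical.em (x.1 ∈ Metric.closedBall (0:R2) (Real.sqrt Bq)) with h1 | h1
      · right
        have h2 := hx h1
        rw [Metric.mem_closedBall, dist_zero_right, not_le] at h2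
        have h3 : Real.sqrt Bp ^ 2 < ‖x.2‖ ^ 2 :=
          pow_lt_pow_left₀ h2 (Real.sqrt_nonneg _) (by norm_num)
        rw [Real.sq_sqrt hBppos.le] at h3
        exact lt_of_lt_of_le h3 (norm_sq_le_sq2 x.2)
      · left
        rw [Metric.mem_closedBall, dist_zero_right, not_le] at h1
        have h3 : Real.sqrt Bq ^ 2 < ‖x.1‖ ^ 2 :=
          pow_lt_pow_left₀ h1 (Real.sqrt_nonneg _) (by norm_num)
        rw [Real.sq_sqrt hBqpos.le] at h3
        exact lt_of_lt_of_le h3 (norm_sq_le_sq2 x.1)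
    have hev : V0 =ᶠ[nhds x] (fun _ => c) := by
      rcases hxcase with hxc | hxc
      · filter_upwards [(isOpen_lt continuous_const hContq).mem_nhds hxc] with y hy
        rw [hV0def]
        dsimp only
        rw [hχ0 y.1 hy]
        ring
      · filter_upwards [(isOpen_lt continuous_const hContp).mem_nhds hxc] with y hy
        rw [hV0def]
        dsimp only
        rw [hψ0 y.2 hy]
        ring
    show fderiv ℝ V0 x = 0
    rw [hev.fderiv_eq]
    exact fderiv_const_apply c
  · -- positivity
    intro x
    exact lt_of_lt_of_le hc (hV0c x)
  · -- fiber condition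
    intro x
    obtain ⟨Dψ, hDψ, hDψbd⟩ := cut_sq2_fderiv hS1pos hL3pos C0 hC0 x.2
    have hDψ' : HasFDerivAt ψ Dψ x.2 := by rw [hψdef]; exact hDψ
    obtain ⟨A, hAdef⟩ : ∃ _x : R2 → ℝ, _x = fun b => V b * χ b := ⟨_, rfl⟩
    have hAd : Differentiable ℝ A := by
      rw [hAdef]
      exact hVd.mul (hχsm.differentiable (by simp))
    have hfun : V0 = fun y : Phase => c + A y.1 * ψ y.2 := by
      funext y
      rw [hV0def, hAdef]
      dsimp only
      ring
    have hfd1 : HasFDerivAt (fun y : Phase => A y.1)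
        ((fderiv ℝ A x.1).comp (ContinuousLinearMap.fst ℝ R2 R2)) x :=
      (hAd x.1).hasFDerivAt.comp x hasFDerivAt_fst
    have hfd2 : HasFDerivAt (fun y : Phase => ψ y.2)
        (Dψ.comp (ContinuousLinearMap.snd ℝ R2 R2)) x :=
      hDψ'.comp x hasFDerivAt_snd
    have hV0fd : HasFDerivAt V0
        ((A x.1 • (Dψ.comp (ContinuousLinearMap.snd ℝ R2 R2)) +
          ψ x.2 • ((fderiv ℝ A x.1).comp (ContinuousLinearMap.fst ℝ R2 R2)))) x := by
      rw [hfun]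
      exact (hfd1.mul hfd2).const_add c
    rw [hV0fd.fderiv]
    have hval : (A x.1 • (Dψ.comp (ContinuousLinearMap.snd ℝ R2 R2)) +
        ψ x.2 • ((fderiv ℝ A x.1).comp (ContinuousLinearMap.fst ℝ R2 R2)))
          ((0,0), x.2) = A x.1 * (Dψ x.2) := by
      have hz : ((fderiv ℝ A x.1)) ((0:ℝ),(0:ℝ)) = 0 := by
        have : ((0:ℝ),(0:ℝ)) = (0 : R2) := rfl
        rw [this, map_zero]
      simp [hz]
    rw [hval]
    have hA0 : 0 ≤ A x.1 := by
      rw [hAdef]; exact mul_nonneg (hVnn x.1) (hχr x.1).1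
    have hAM : A x.1 ≤ M := by
      rw [hAdef]
      dsimp only
      have := mul_le_mul_of_nonneg_left (hχr x.1).2 (hVnn x.1)
      have := hMV x.1
      nlinarith [(hχr x.1).1]
    have hbd : |A x.1 * Dψ x.2| ≤ M * (2*C0/L3) := by
      rw [abs_mul]
      apply mul_le_mul _ hDψbd (abs_nonneg _) hM0
      rw [abs_of_nonneg hA0]; exact hAM
    have hlt : M * (2*C0/L3) < c := by
      have heq : M * (2*C0/L3) = (M*(2*C0))/L3 := by ring
      rw [heq, div_lt_iff₀ hL3pos]
      have hceq : c * L3 = 2*C0*M + c := by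
        rw [hL3def]; field_simp
      nlinarith [hceq]
    have hge := hV0c x
    have := abs_le.mp hbd
    linarith
  · -- chord equivalence
    intro η v
    constructor
    · intro hLHS
      have h1 : IsChord Hvc 0 q0 q1 η v := by
        rw [hHvcdef]
        have := (isChord_shift V c c q0 q1 η v).mp hLHS
        rwa [sub_self] at this
      have h5 : IsChord HV0 0 q0 q1 η v := isChord_congr hO1open hEq1 (hmemO1Vc η v h1) h1
      rw [hHV0def] at h5
      exact h5
    · intro hRHS
      have h1 : IsChord HV0 0 q0 q1 η v := by rw [hHV0def]; exact hRHS
      have h2 : IsChord HW 0 q0 q1 η v := isChord_congr hOopen hEqW (hmemO η v h1) h1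
      have h3 : IsChord Hvc 0 q0 q1 η v := isChord_congr hO1open hEq2 (hmemO1W η v h2) h2
      rw [hHvcdef] at h3
      exact (isChord_shift V c c q0 q1 η v).mpr (by rw [sub_self]; exact h3)
end
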